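/- Let n, g, σ, n', g', σ', M, w, t ∈ ℤ>0 with n ≥ n', g ≥ g' + 3·log₂ n + 2, and σ ≥ σ'. If the SLG Random Access problem with parameters (n, g, σ) has (M, w, t)-certificates, then the SLG Random Access problem with parameters (n', g', σ') also has (M, w, t)-certificates. -/

import Mathlib

open scoped BigOperators

/-- Symbols of a grammar with `nv` variables and terminal alphabet `α`:
variables are `Sum.inl`, terminals are `Sum.inr`. -/
abbrev GSym (nv : ℕ) (α : Type) : Type := Sum (Fin nv) α

open Classical in
/-- The number of runs (maximal blocks of equal consecutive entries) of a list,
i.e. the length `|rle(X)|` of its run-length encoding. -/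
noncomputable def numRuns {β : Type} : List β → ℕ
  | [] => 0
  | [_] => 1
  | a :: b :: l => (if a = b then 0 else 1) + numRuns (b :: l)

/-- A weighted straight-line grammar (SLG) with variables `Fin nv` and terminal
alphabet `α`.  The same structure is used for run-length straight-line grammars
(RLSLGs), which differ from SLGs only in how their size is measured
(`sizeRLE` instead of `size`).  The field `rank` witnesses the existence of a
strict linear order `≺` on the variables with `B ≺ A` whenever `B` occurs in
`rhs A`. -/
structure WSLG (nv : ℕ) (α : Type) where
  rhs : Fin nv → List (GSym nv α)
  start : GSym nv α
  wt : α → ℕ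
  wt_pos : ∀ a, 1 ≤ wt a
  rank : Fin nv → ℕ
  rank_lt : ∀ A B, Sum.inl B ∈ rhs A → rank B < rank A

namespace WSLG

variable {nv nv' : ℕ} {α : Type}

/-- Fuel-based expansion; the fuel is always sufficient thanks to `rank_lt`. -/
def expandFuel (G : WSLG nv α) : ℕ → GSym nv α → List α
  | _, Sum.inr a => [a]
  | 0, Sum.inl _ => []
  | n + 1, Sum.inl A => ((G.rhs A).map (G.expandFuel n)).flatten

/-- The expansion `exp(s)` of a symbol `s`. -/
def exp (G : WSLG nv α) : GSym nv α → List α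
  | Sum.inr a => [a]
  | Sum.inl A => G.expandFuel (G.rank A + 1) (Sum.inl A)

/-- The expansion of a sequence of symbols. -/
def expSeq (G : WSLG nv α) (xs : List (GSym nv α)) : List α :=
  (xs.map G.exp).flatten

/-- The weight `⟨s⟩` of a symbol: total weight of the characters of its expansion. -/
def wtSym (G : WSLG nv α) (s : GSym nv α) : ℕ :=
  ((G.exp s).map G.wt).sum

/-- The weight of a sequence of symbols. -/
def wtSeq (G : WSLG nv α) (xs : List (GSym nv α)) : ℕ :=
  ((G.expSeq xs).map G.wt).sum

/-- The size `|G|` of an SLG: total length of all right-hand sides. -/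
def size (G : WSLG nv α) : ℕ := ∑ A, (G.rhs A).length

/-- The size `|G|` of an RLSLG: total run-length-encoded size of all
right-hand sides. -/
noncomputable def sizeRLE (G : WSLG nv α) : ℕ := ∑ A, numRuns (G.rhs A)

/-- A grammar is unweighted if every terminal has weight 1. -/
def Unweighted (G : WSLG nv α) : Prop := ∀ a, G.wt a = 1

/-- `f` is a grammar homomorphism from `G` to `H`:
`exp_G(A) = exp_H(f A)` for every variable `A` of `G`. -/
def IsHom (G : WSLG nv α) (H : WSLG nv' α) (f : Fin nv → Fin nv') : Prop :=
  ∀ A, G.exp (Sum.inl A) = H.exp (Sum.inl (f A))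

/-- Normal form for RLSLGs: every right-hand side is either a pair of exactly
two symbols or a power `s^k` of a single symbol with `k > 2`. -/
def NormalForm (G : WSLG nv α) : Prop :=
  ∀ A, (∃ s t : GSym nv α, G.rhs A = [s, t]) ∨
       (∃ (s : GSym nv α) (k : ℕ), 2 < k ∧ G.rhs A = List.replicate k s)

/-- A grammar is contracting if no variable has a heavy variable child, i.e.
every variable child `B` of `A` satisfies `⟨B⟩ ≤ ⟨A⟩/2`. -/
def Contracting (G : WSLG nv α) : Prop :=
  ∀ A : Fin nv, ∀ B : Fin nv, Sum.inl B ∈ G.rhs A →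
    2 * G.wtSym (Sum.inl B) ≤ G.wtSym (Sum.inl A)

/-- A variable `A` is `τ`-nice (w.r.t. the constant `d`):
(1) every variable child `B` satisfies `⟨B⟩ ≤ ⟨A⟩/τ`;
(2) `|rle(rhs A)| ≤ 2dτ`;
(3) every contiguous substring `X` of `rhs A` with `⟨X⟩ ≤ ⟨A⟩/τ` satisfies
`|rle(X)| ≤ 2d⌈log₂ τ⌉`. -/
def NiceVar (G : WSLG nv α) (d : ℕ) (τ : ℝ) (A : Fin nv) : Prop :=
  (∀ B : Fin nv, Sum.inl B ∈ G.rhs A →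
      (G.wtSym (Sum.inl B) : ℝ) ≤ (G.wtSym (Sum.inl A) : ℝ) / τ) ∧
  ((numRuns (G.rhs A) : ℝ) ≤ 2 * d * τ) ∧
  (∀ X : List (GSym nv α), X <:+: G.rhs A →
      (G.wtSeq X : ℝ) ≤ (G.wtSym (Sum.inl A) : ℝ) / τ →
      (numRuns X : ℝ) ≤ 2 * d * (⌈Real.logb 2 τ⌉ : ℝ))

/-- A grammar is `(τr, τv)`-nice (w.r.t. `d`) if its start symbol is `τr`-nice
and all its other variables are `τv`-nice. -/
def Nice (G : WSLG nv α) (d : ℕ) (τr τv : ℝ) : Prop :=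
  (∀ A : Fin nv, Sum.inl A = G.start → G.NiceVar d τr A) ∧
  (∀ A : Fin nv, Sum.inl A ≠ G.start → G.NiceVar d τv A)

/-- Parent–child step in the parse tree: from the node `(A, a)` to its `i`-th
child `(B_i, a + ⟨B_0 ⋯ B_{i-1}⟩)` where `rhs A = B_0 ⋯ B_{k-1}`. -/
def PTStep (G : WSLG nv α) (p q : GSym nv α × ℕ) : Prop :=
  ∃ (A : Fin nv) (i : ℕ) (h : i < (G.rhs A).length),
    p.1 = Sum.inl A ∧
    q = ((G.rhs A).get ⟨i, h⟩, p.2 + G.wtSeq ((G.rhs A).take i))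

/-- `PTNode G ℓ v` states that `v` is a node of the parse tree `P_G` whose
path from the root `(start, 0)` has `ℓ` edges. -/
inductive PTNode (G : WSLG nv α) : ℕ → GSym nv α × ℕ → Prop
  | root : PTNode G 0 (G.start, 0)
  | step {n : ℕ} {p q : GSym nv α × ℕ} :
      PTNode G n p → PTStep G p q → PTNode G (n + 1) q

/-- Fuel-based height; the fuel is always sufficient thanks to `rank_lt`. -/
def heightFuel (G : WSLG nv α) : ℕ → GSym nv α → ℕ
  | _, Sum.inr _ => 0
  | 0, Sum.inl _ => 0
  | n + 1, Sum.inl A => 1 + ((G.rhs A).map (G.heightFuel n)).foldr max 0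

/-- The height of a symbol: `h(a) = 0` for terminals and
`h(A) = 1 + max_i h(B_i)` for a variable with `rhs A = B_0 ⋯ B_{k-1}`. -/
def heightSym (G : WSLG nv α) : GSym nv α → ℕ
  | Sum.inr _ => 0
  | Sum.inl A => G.heightFuel (G.rank A + 1) (Sum.inl A)

/-- A leaf variable (for parameter `b`): its right-hand side consists of
terminals only and has length in `[b .. 2b)`. -/
def IsLeafVar (G : WSLG nv α) (b : ℕ) (A : Fin nv) : Prop :=
  (∀ s ∈ G.rhs A, ∃ a : α, s = Sum.inr a) ∧
  b ≤ (G.rhs A).length ∧ (G.rhs A).length < 2 * b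

/-- A top variable: its right-hand side contains only variables. -/
def IsTopVar (G : WSLG nv α) (A : Fin nv) : Prop :=
  ∀ s ∈ G.rhs A, ∃ B : Fin nv, s = Sum.inl B

/-- A grammar is `b`-leafy if every variable is a leaf variable or a top
variable. -/
def BLeafy (G : WSLG nv α) (b : ℕ) : Prop :=
  ∀ A, G.IsLeafVar b A ∨ G.IsTopVar A

open Classical in
/-- The size `|Top(G)|` of the top part of a (b-leafy) RLSLG: total
run-length-encoded size of the right-hand sides of the top variables. -/
noncomputable def topSizeRLE (G : WSLG nv α) : ℕ :=
  ∑ A, if G.IsTopVar A then numRuns (G.rhs A) else 0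

open Classical in
/-- The number of leaf variables of a (b-leafy) grammar. -/
noncomputable def numLeafVars (G : WSLG nv α) (b : ℕ) : ℕ :=
  (Finset.univ.filter fun A => G.IsLeafVar b A).card

/-- For an unweighted `b`-leafy grammar `G`, the variable `A` (a top variable)
is `τ`-nice as a variable of the top part `Top(G)`: in `Top(G)`, the variables
are the top variables of `G`, the terminals are the leaf variables of `G`, and
the weight of a symbol is the length of its `G`-expansion. -/
def NiceTopVar (G : WSLG nv α) (d : ℕ) (τ : ℝ) (A : Fin nv) : Prop :=
  (∀ B : Fin nv, Sum.inl B ∈ G.rhs A → G.IsTopVar B →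
      ((G.exp (Sum.inl B)).length : ℝ) ≤ ((G.exp (Sum.inl A)).length : ℝ) / τ) ∧
  ((numRuns (G.rhs A) : ℝ) ≤ 2 * d * τ) ∧
  (∀ X : List (GSym nv α), X <:+: G.rhs A →
      ((G.expSeq X).length : ℝ) ≤ ((G.exp (Sum.inl A)).length : ℝ) / τ →
      (numRuns X : ℝ) ≤ 2 * d * (⌈Real.logb 2 τ⌉ : ℝ))

/-- The top part `Top(G)` of an unweighted `b`-leafy grammar `G` is
`(τr, τv)`-nice (w.r.t. `d`): the start symbol, if it is a top variable, is
`τr`-nice in `Top(G)`, and all other top variables are `τv`-nice in `Top(G)`. -/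
def TopNice (G : WSLG nv α) (d : ℕ) (τr τv : ℝ) : Prop :=
  (∀ A : Fin nv, G.IsTopVar A → Sum.inl A = G.start → G.NiceTopVar d τr A) ∧
  (∀ A : Fin nv, G.IsTopVar A → Sum.inl A ≠ G.start → G.NiceTopVar d τv A)

end WSLG

/-- A data-structure problem `f : X × Y → Z` has `(M, w, t)`-certificates. -/
def HasCertificates {X Y Z : Type*} (f : X → Y → Z) (M w t : ℕ) : Prop :=
  ∃ D : Y → Fin M → (Fin w → Bool),
    ∀ x y, ∃ C : Finset (Fin M), C.card = t ∧
      ∀ y', (∀ i ∈ C, D y i = D y' i) → f x y' = f x y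

/-- An input of the SLG Random Access problem with parameters `(n, g, σ)`:
an unweighted SLG of size at most `g` producing a string `T ∈ [0..σ)^n`. -/
structure RAInput (n g σ : ℕ) where
  nv : ℕ
  G : WSLG nv (Fin σ)
  unweighted : G.Unweighted
  size_le : G.size ≤ g
  len_eq : (G.exp G.start).length = n

/-- The SLG Random Access problem: given a position `i ∈ [0..n)` and an input
producing `T`, return `T[i]`. -/
def RAProblem (n g σ : ℕ) (x : Fin n) (y : RAInput n g σ) : Fin σ :=
  (y.G.exp y.G.start).get (Fin.cast y.len_eq.symm x)

/-- The Blocked Lopsided Set Disjointness (BLSD) problem with parameters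
`N, B`: queries are `S : [N] → [B]`, inputs are `T : [N] → 2^[B]`, and the
answer is whether there exists `i` with `S i ∈ T i`. -/
def BLSDProblem (N B : ℕ) (S : Fin N → Fin B) (T : Fin N → Finset (Fin B)) : Prop :=
  ∃ i, S i ∈ T i


/-! ### Auxiliary lemmas for the reduction -/

namespace WSLG
variable {nv : ℕ} {α : Type}

lemma expandFuel_inr (G : WSLG nv α) (f : ℕ) (a : α) :
    G.expandFuel f (Sum.inr a) = [a] := by cases f <;> rfl

lemma expandFuel_succ' (G : WSLG nv α) (f : ℕ) (A : Fin nv) :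
    G.expandFuel (f+1) (Sum.inl A) = ((G.rhs A).map (G.expandFuel f)).flatten := rfl

lemma exp_inr (G : WSLG nv α) (a : α) : G.exp (Sum.inr a) = [a] := rfl

lemma expandFuel_congr (G : WSLG nv α) :
    ∀ (r : ℕ) (A : Fin nv), G.rank A ≤ r → ∀ f₁ f₂, G.rank A < f₁ → G.rank A < f₂ →
      G.expandFuel f₁ (Sum.inl A) = G.expandFuel f₂ (Sum.inl A) := by
  intro r
  induction r with
  | zero =>
    intro A hA f₁ f₂ h₁ h₂
    obtain ⟨a, rfl⟩ : ∃ a, f₁ = a + 1 := ⟨f₁ - 1, by omega⟩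
    obtain ⟨b, rfl⟩ : ∃ b, f₂ = b + 1 := ⟨f₂ - 1, by omega⟩
    rw [expandFuel_succ', expandFuel_succ']
    congr 1
    apply List.map_congr_left
    intro s hs
    match s with
    | Sum.inr c => rw [expandFuel_inr, expandFuel_inr]
    | Sum.inl B => exact absurd (G.rank_lt A B hs) (by omega)
  | succ r ih =>
    intro A hA f₁ f₂ h₁ h₂
    obtain ⟨a, rfl⟩ : ∃ a, f₁ = a + 1 := ⟨f₁ - 1, by omega⟩
    obtain ⟨b, rfl⟩ : ∃ b, f₂ = b + 1 := ⟨f₂ - 1, by omega⟩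
    rw [expandFuel_succ', expandFuel_succ']
    congr 1
    apply List.map_congr_left
    intro s hs
    match s with
    | Sum.inr c => rw [expandFuel_inr, expandFuel_inr]
    | Sum.inl B =>
      have hB := G.rank_lt A B hs
      exact ih B (by omega) a b (by omega) (by omega)

lemma expandFuel_eq_exp (G : WSLG nv α) (A : Fin nv) (f : ℕ) (h : G.rank A < f) :
    G.expandFuel f (Sum.inl A) = G.exp (Sum.inl A) :=
  G.expandFuel_congr (G.rank A) A le_rfl f (G.rank A + 1) h (Nat.lt_succ_self _)

lemma exp_inl (G : WSLG nv α) (A : Fin nv) :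
    G.exp (Sum.inl A) = G.expSeq (G.rhs A) := by
  show G.expandFuel (G.rank A + 1) (Sum.inl A) = _
  rw [expandFuel_succ', expSeq]
  congr 1
  apply List.map_congr_left
  intro s hs
  match s with
  | Sum.inr c => rw [expandFuel_inr, exp_inr]
  | Sum.inl B => exact G.expandFuel_eq_exp B _ (G.rank_lt A B hs)

lemma expSeq_nil (G : WSLG nv α) : G.expSeq [] = [] := rfl

lemma expSeq_cons (G : WSLG nv α) (s : GSym nv α) (l : List (GSym nv α)) :
    G.expSeq (s :: l) = G.exp s ++ G.expSeq l := rfl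

lemma expSeq_append (G : WSLG nv α) (l₁ l₂ : List (GSym nv α)) :
    G.expSeq (l₁ ++ l₂) = G.expSeq l₁ ++ G.expSeq l₂ := by
  simp [expSeq]

end WSLG

namespace RACertAux

lemma size_shift (m j : ℕ) (h : ¬ m >>> j ≤ 1) : j + 1 < Nat.size m := by
  rw [Nat.lt_size]
  rw [Nat.shiftRight_eq_div_pow] at h
  have h2 : 2 ≤ m / 2 ^ j := by omega
  have := (Nat.le_div_iff_mul_le (by positivity : 0 < 2 ^ j)).mp h2
  calc 2 ^ (j + 1) = 2 ^ j * 2 := pow_succ 2 j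
  _ ≤ m := by omega

/-- Embedding of symbols into the padded grammar. -/
def embSym (σ' σ nv m : ℕ) (hσ : σ' ≤ σ) : GSym nv (Fin σ') → GSym (nv + 1 + Nat.size m) (Fin σ)
  | Sum.inl A => Sum.inl (Fin.castLE (by omega) A)
  | Sum.inr a => Sum.inr (Fin.castLE hσ a)

/-- Right-hand side of the padding variable `W j`, which derives `0^(m >>> j)`
(for `1 ≤ m >>> j`). -/
def padBody (σ nv : ℕ) (hσp : 0 < σ) (m : ℕ) (j : ℕ) : List (GSym (nv + 1 + Nat.size m) (Fin σ)) :=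
  if h : m >>> j ≤ 1 then [Sum.inr ⟨0, hσp⟩]
  else [Sum.inl ⟨nv + (j+1), by have := size_shift m j h; omega⟩,
        Sum.inl ⟨nv + (j+1), by have := size_shift m j h; omega⟩] ++
       (if m >>> j % 2 = 1 then [Sum.inr ⟨0, hσp⟩] else [])

lemma padBody_length_le (σ nv : ℕ) (hσp : 0 < σ) (m : ℕ) (j : ℕ) : (padBody σ nv hσp m j).length ≤ 3 := by
  unfold padBody
  split
  · simp
  · split <;> simp

lemma padBody_length_of_le (σ nv : ℕ) (hσp : 0 < σ) (m : ℕ) (j : ℕ) (h : m >>> j ≤ 1) :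
    (padBody σ nv hσp m j).length = 1 := by
  unfold padBody
  rw [dif_pos h]
  rfl

lemma padBody_inl_mem {σ nv : ℕ} {hσp : 0 < σ} {m : ℕ} {j : ℕ} {B : Fin (nv + 1 + Nat.size m)}
    (h : Sum.inl B ∈ padBody σ nv hσp m j) :
    (B : ℕ) = nv + (j+1) ∧ j + 1 < Nat.size m := by
  unfold padBody at h
  split at h
  · simp at h
  · next hgt =>
    have hj := size_shift m j hgt
    simp only [List.mem_append, List.mem_cons, List.mem_singleton] at h
    rcases h with (h | h | h) | h
    · exact ⟨congrArg Fin.val (Sum.inl.inj h.symm) ▸ rfl, hj⟩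
    · exact ⟨congrArg Fin.val (Sum.inl.inj h.symm) ▸ rfl, hj⟩
    · simp at h
    · split at h <;> simp at h

/-- The padded grammar: the original grammar `G` (with terminals embedded into
`Fin σ`), a new start symbol, and padding variables deriving `0^(m >>> j)`. -/
def padded (σ' σ nv : ℕ) (hσ : σ' ≤ σ) (hσp : 0 < σ) (G : WSLG nv (Fin σ')) (m : ℕ) :
    WSLG (nv + 1 + Nat.size m) (Fin σ) where
  rhs i :=
    if h : (i : ℕ) < nv then (G.rhs ⟨i, h⟩).map (embSym σ' σ nv m hσ)
    else if (i : ℕ) = nv then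
      embSym σ' σ nv m hσ G.start :: (if m = 0 then [] else padBody σ nv hσp m 0)
    else if m >>> ((i : ℕ) - nv) = 0 then [] else padBody σ nv hσp m ((i : ℕ) - nv)
  start := Sum.inl ⟨nv, by omega⟩
  wt _ := 1
  wt_pos _ := le_rfl
  rank i :=
    if h : (i : ℕ) < nv then G.rank ⟨i, h⟩
    else Finset.univ.sup G.rank + 2 + Nat.size m - ((i : ℕ) - nv)
  rank_lt := by
    intro A B hB
    have hsup : ∀ C : Fin nv, G.rank C ≤ Finset.univ.sup G.rank :=
      fun C => Finset.le_sup (Finset.mem_univ C)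
    by_cases hA : (A : ℕ) < nv
    · rw [dif_pos hA] at hB
      obtain ⟨s, hs, hse⟩ := List.mem_map.mp hB
      match s with
      | Sum.inr c => simp [embSym] at hse
      | Sum.inl B' =>
        have hBval : (B : ℕ) = (B' : ℕ) := by
          simpa [embSym] using congrArg (fun z => Sum.elim Fin.val (fun _ => 0) z) hse.symm
        have hBlt : (B : ℕ) < nv := hBval ▸ B'.isLt
        have : G.rank ⟨(B : ℕ), hBlt⟩ < G.rank ⟨(A : ℕ), hA⟩ := by
          have : (⟨(B : ℕ), hBlt⟩ : Fin nv) = B' := Fin.ext hBval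
          rw [this]
          exact G.rank_lt _ _ hs
        simp only [dif_pos hA, dif_pos hBlt]
        exact this
    · rw [dif_neg hA] at hB
      by_cases hAe : (A : ℕ) = nv
      · rw [if_pos hAe] at hB
        rcases List.mem_cons.mp hB with h | h
        · -- B is the embedded original start symbol
          match hst : G.start with
          | Sum.inr c => rw [hst] at h; simp [embSym] at h
          | Sum.inl S₀ =>
            rw [hst] at h
            have hBval : (B : ℕ) = (S₀ : ℕ) := by
              simpa [embSym] using congrArg (fun z => Sum.elim Fin.val (fun _ => 0) z) h
            have hBlt : (B : ℕ) < nv := hBval ▸ S₀.isLt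
            rw [dif_pos hBlt, dif_neg hA]
            have h1 : G.rank ⟨(B : ℕ), hBlt⟩ ≤ Finset.univ.sup G.rank := hsup _
            omega
        · by_cases hm : m = 0
          · rw [if_pos hm] at h; simp at h
          · rw [if_neg hm] at h
            obtain ⟨hBval, hBlt⟩ := padBody_inl_mem h
            have hBnv : ¬ (B : ℕ) < nv := by omega
            rw [dif_neg hBnv, dif_neg hA]
            omega
      · rw [if_neg hAe] at hB
        split at hB
        · simp at hB
        · obtain ⟨hBval, hBlt⟩ := padBody_inl_mem hB
          have hBnv : ¬ (B : ℕ) < nv := by omega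
          rw [dif_neg hBnv, dif_neg hA]
          have hAlt : (A : ℕ) < nv + 1 + Nat.size m := A.isLt
          omega


lemma padded_rhs_lt (σ' σ nv : ℕ) (hσ : σ' ≤ σ) (hσp : 0 < σ) (G : WSLG nv (Fin σ')) (m : ℕ) {i : Fin (nv + 1 + Nat.size m)} (h : (i : ℕ) < nv) :
    (padded σ' σ nv hσ hσp G m).rhs i = (G.rhs ⟨i, h⟩).map (embSym σ' σ nv m hσ) := by
  simp only [padded, dif_pos h]

lemma padded_rhs_S (σ' σ nv : ℕ) (hσ : σ' ≤ σ) (hσp : 0 < σ) (G : WSLG nv (Fin σ')) (m : ℕ) {i : Fin (nv + 1 + Nat.size m)} (h : (i : ℕ) = nv) :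
    (padded σ' σ nv hσ hσp G m).rhs i =
      embSym σ' σ nv m hσ G.start :: (if m = 0 then [] else padBody σ nv hσp m 0) := by
  simp only [padded]
  rw [dif_neg (by omega), if_pos h]

lemma padded_rhs_W (σ' σ nv : ℕ) (hσ : σ' ≤ σ) (hσp : 0 < σ) (G : WSLG nv (Fin σ')) (m : ℕ) {i : Fin (nv + 1 + Nat.size m)} (k : ℕ) (hk1 : 1 ≤ k)
    (hik : (i : ℕ) = nv + k) (hq : m >>> k ≠ 0) :
    (padded σ' σ nv hσ hσp G m).rhs i = padBody σ nv hσp m k := by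
  simp only [padded]
  rw [dif_neg (by omega), if_neg (by omega)]
  rw [show (i : ℕ) - nv = k by omega, if_neg hq]

lemma exp_emb_var (σ' σ nv : ℕ) (hσ : σ' ≤ σ) (hσp : 0 < σ) (G : WSLG nv (Fin σ')) (m : ℕ) : ∀ (r : ℕ) (A : Fin nv), G.rank A ≤ r →
    (padded σ' σ nv hσ hσp G m).exp (Sum.inl (Fin.castLE (by omega) A)) =
      (G.exp (Sum.inl A)).map (Fin.castLE hσ) := by
  intro r
  induction r with
  | zero =>
    intro A hA
    rw [WSLG.exp_inl, G.exp_inl, padded_rhs_lt σ' σ nv hσ hσp G m (A.isLt),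
      show (⟨((Fin.castLE (by omega) A : Fin (nv + 1 + Nat.size m)) : ℕ), A.isLt⟩ : Fin nv) = A
        from Fin.ext rfl]
    unfold WSLG.expSeq
    rw [List.map_map, List.map_flatten, List.map_map]
    congr 1
    apply List.map_congr_left
    intro s hs
    match s with
    | Sum.inr c => simp [embSym, WSLG.exp_inr, Function.comp]
    | Sum.inl B => exact absurd (G.rank_lt A B hs) (by omega)
  | succ r ih =>
    intro A hA
    rw [WSLG.exp_inl, G.exp_inl, padded_rhs_lt σ' σ nv hσ hσp G m (A.isLt),
      show (⟨((Fin.castLE (by omega) A : Fin (nv + 1 + Nat.size m)) : ℕ), A.isLt⟩ : Fin nv) = A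
        from Fin.ext rfl]
    unfold WSLG.expSeq
    rw [List.map_map, List.map_flatten, List.map_map]
    congr 1
    apply List.map_congr_left
    intro s hs
    match s with
    | Sum.inr c => simp [embSym, WSLG.exp_inr, Function.comp]
    | Sum.inl B =>
      have hB := G.rank_lt A B hs
      simpa [embSym, Function.comp] using ih B (by omega)

lemma exp_emb (σ' σ nv : ℕ) (hσ : σ' ≤ σ) (hσp : 0 < σ) (G : WSLG nv (Fin σ')) (m : ℕ) (s : GSym nv (Fin σ')) :
    (padded σ' σ nv hσ hσp G m).exp (embSym σ' σ nv m hσ s) =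
      (G.exp s).map (Fin.castLE hσ) := by
  match s with
  | Sum.inr a => simp [embSym, WSLG.exp_inr]
  | Sum.inl A => exact exp_emb_var σ' σ nv hσ hσp G m (G.rank A) A le_rfl

lemma expSeq_padBody (σ' σ nv : ℕ) (hσ : σ' ≤ σ) (hσp : 0 < σ) (G : WSLG nv (Fin σ')) (m : ℕ) : ∀ (q j : ℕ), m >>> j = q → 1 ≤ q →
    (padded σ' σ nv hσ hσp G m).expSeq (padBody σ nv hσp m j) =
      List.replicate q (⟨0, hσp⟩ : Fin σ) := by
  intro q
  induction q using Nat.strong_induction_on with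
  | _ q ih =>
    intro j hq h1
    by_cases hle : m >>> j ≤ 1
    · have hq1 : q = 1 := by omega
      subst hq1
      unfold padBody
      rw [dif_pos hle]
      simp [WSLG.expSeq_cons, WSLG.exp_inr, WSLG.expSeq_nil]
    · have h2 : 2 ≤ q := by omega
      unfold padBody
      rw [dif_neg hle]
      rw [WSLG.expSeq_append, WSLG.expSeq_cons, WSLG.expSeq_cons, WSLG.expSeq_nil]
      have hWq : m >>> (j+1) = q / 2 := by rw [Nat.shiftRight_succ, hq]
      have hW : (padded σ' σ nv hσ hσp G m).exp
          (Sum.inl ⟨nv + (j+1), by have := size_shift m j hle; omega⟩) =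
          List.replicate (q / 2) (⟨0, hσp⟩ : Fin σ) := by
        rw [WSLG.exp_inl, padded_rhs_W σ' σ nv hσ hσp G m (j+1) (by omega) rfl (by omega)]
        exact ih (q / 2) (by omega) (j+1) hWq (by omega)
      rw [hW]
      by_cases hb : m >>> j % 2 = 1
      · rw [if_pos hb]
        rw [WSLG.expSeq_cons, WSLG.exp_inr, WSLG.expSeq_nil, List.append_nil]
        rw [show ((⟨0, hσp⟩ : Fin σ) :: ([] : List (Fin σ))) =
          List.replicate 1 (⟨0, hσp⟩ : Fin σ) from rfl]
        simp only [List.append_nil, ← List.replicate_add]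
        congr 1
        omega
      · rw [if_neg hb, WSLG.expSeq_nil]
        simp only [List.append_nil, ← List.replicate_add]
        congr 1
        omega


lemma exp_padded_start (σ' σ nv : ℕ) (hσ : σ' ≤ σ) (hσp : 0 < σ) (G : WSLG nv (Fin σ')) (m : ℕ) :
    (padded σ' σ nv hσ hσp G m).exp (padded σ' σ nv hσ hσp G m).start =
      (G.exp G.start).map (Fin.castLE hσ) ++ List.replicate m (⟨0, hσp⟩ : Fin σ) := by
  show (padded σ' σ nv hσ hσp G m).exp (Sum.inl ⟨nv, by omega⟩) = _
  rw [WSLG.exp_inl, padded_rhs_S σ' σ nv hσ hσp G m rfl, WSLG.expSeq_cons,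
    exp_emb σ' σ nv hσ hσp G m]
  congr 1
  by_cases hm : m = 0
  · subst hm
    rw [if_pos rfl, WSLG.expSeq_nil, List.replicate_zero]
  · rw [if_neg hm]
    exact expSeq_padBody σ' σ nv hσ hσp G m m 0 (by rw [Nat.shiftRight_zero]) (by omega)

lemma padded_len (σ' σ nv : ℕ) (hσ : σ' ≤ σ) (hσp : 0 < σ) (G : WSLG nv (Fin σ')) (m : ℕ) :
    ((padded σ' σ nv hσ hσp G m).exp (padded σ' σ nv hσ hσp G m).start).length =
      (G.exp G.start).length + m := by
  rw [exp_padded_start]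
  simp

lemma padded_size (σ' σ nv : ℕ) (hσ : σ' ≤ σ) (hσp : 0 < σ) (G : WSLG nv (Fin σ')) (m : ℕ) :
    (padded σ' σ nv hσ hσp G m).size ≤ G.size + 3 * (Nat.size m - 1) + 2 := by
  classical
  have hlen : ∀ i : Fin (nv + 1 + (Nat.size m)), ((padded σ' σ nv hσ hσp G m).rhs i).length =
      if h : (i : ℕ) < nv then (G.rhs ⟨i, h⟩).length
      else if (i : ℕ) = nv then 1 + (if m = 0 then 0 else (padBody σ nv hσp m 0).length)
      else if m >>> ((i : ℕ) - nv) = 0 then 0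
           else (padBody σ nv hσp m ((i : ℕ) - nv)).length := by
    intro i
    by_cases h : (i : ℕ) < nv
    · rw [padded_rhs_lt σ' σ nv hσ hσp G m h, dif_pos h, List.length_map]
    · rw [dif_neg h]
      by_cases h2 : (i : ℕ) = nv
      · rw [if_pos h2, padded_rhs_S σ' σ nv hσ hσp G m h2, List.length_cons]
        by_cases h3 : m = 0 <;> simp [h3, Nat.add_comm]
      · rw [if_neg h2]
        by_cases h3 : m >>> ((i : ℕ) - nv) = 0
        · rw [if_pos h3]
          show ((if hh : (i : ℕ) < nv then _ else if (i : ℕ) = nv then _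
              else if m >>> ((i : ℕ) - nv) = 0 then ([] : List (GSym (nv+1+(Nat.size m)) (Fin σ)))
              else padBody σ nv hσp m ((i : ℕ) - nv)).length) = 0
          rw [dif_neg h, if_neg h2, if_pos h3]
          rfl
        · rw [if_neg h3, padded_rhs_W σ' σ nv hσ hσp G m ((i : ℕ) - nv) (by omega) (by omega) h3]
  unfold WSLG.size
  calc ∑ i : Fin (nv + 1 + (Nat.size m)), ((padded σ' σ nv hσ hσp G m).rhs i).length
      = ∑ i : Fin (nv + 1), ((padded σ' σ nv hσ hσp G m).rhs (Fin.castAdd (Nat.size m) i)).length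
        + ∑ j : Fin (Nat.size m), ((padded σ' σ nv hσ hσp G m).rhs (Fin.natAdd (nv+1) j)).length :=
        Fin.sum_univ_add _
    _ ≤ G.size + 3 * ((Nat.size m) - 1) + 2 := ?_
  have hpart1 : ∑ i : Fin (nv + 1), ((padded σ' σ nv hσ hσp G m).rhs (Fin.castAdd (Nat.size m) i)).length
      = G.size + (1 + (if m = 0 then 0 else (padBody σ nv hσp m 0).length)) := by
    rw [Fin.sum_univ_castSucc]
    congr 1
    · rw [WSLG.size]
      apply Finset.sum_congr rfl
      intro i _
      rw [hlen]
      have hival : ((Fin.castAdd (Nat.size m) (Fin.castSucc i) : Fin (nv+1+(Nat.size m))) : ℕ) = (i : ℕ) := rfl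
      rw [dif_pos (by rw [hival]; exact i.isLt)]
      congr 1
    · rw [hlen]
      have hival : ((Fin.castAdd (Nat.size m) (Fin.last nv) : Fin (nv+1+(Nat.size m))) : ℕ) = nv := rfl
      rw [dif_neg (by omega), if_pos hival]
  have hpart2 : ∀ j : Fin (Nat.size m), ((padded σ' σ nv hσ hσp G m).rhs (Fin.natAdd (nv+1) j)).length
      = (if m >>> ((j : ℕ) + 1) = 0 then 0 else (padBody σ nv hσp m ((j : ℕ) + 1)).length) := by
    intro j
    rw [hlen]
    have hival : ((Fin.natAdd (nv+1) j : Fin (nv+1+(Nat.size m))) : ℕ) = nv + 1 + (j : ℕ) := rfl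
    rw [dif_neg (by omega), if_neg (by omega),
      show ((Fin.natAdd (nv+1) j : Fin (nv+1+(Nat.size m))) : ℕ) - nv = (j : ℕ) + 1 by omega]
  rw [hpart1]
  have hsum2 : ∑ j : Fin (Nat.size m), ((padded σ' σ nv hσ hσp G m).rhs (Fin.natAdd (nv+1) j)).length
      = ∑ j ∈ Finset.range (Nat.size m),
          (if m >>> (j + 1) = 0 then 0 else (padBody σ nv hσp m (j + 1)).length) := by
    rw [← Fin.sum_univ_eq_sum_range
      (fun j => if m >>> (j + 1) = 0 then 0 else (padBody σ nv hσp m (j + 1)).length) (Nat.size m)]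
    exact Finset.sum_congr rfl fun j _ => hpart2 j
  rw [hsum2]
  -- now case analysis on (Nat.size m)
  by_cases hm0 : m = 0
  · subst hm0
    simp
  · have hm1 : 1 ≤ m := by omega
    have hL1 : 1 ≤ (Nat.size m) := Nat.size_pos.mpr (by omega)
    rw [if_neg hm0]
    by_cases hLe : (Nat.size m) = 1
    · have hm2 : m = 1 := by
        have h1 : m < 2 ^ 1 := by
          rw [← hLe]; exact Nat.lt_size_self m
        omega
      simp only [hLe]
      rw [Finset.sum_range_one]
      rw [if_pos (show m >>> (0 + 1) = 0 by rw [hm2]; rfl)]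
      rw [padBody_length_of_le σ nv hσp m 0 (by rw [Nat.shiftRight_zero, hm2])]
    · obtain ⟨l, hL2⟩ : ∃ l, Nat.size m = l + 2 := ⟨Nat.size m - 2, by omega⟩
      simp only [hL2]
      have hmlt : m < 2 ^ (l + 2) := by rw [← hL2]; exact Nat.lt_size_self m
      have hmge : 2 ^ (l + 1) ≤ m := Nat.lt_size.mp (by omega)
      have hlast : m >>> (l + 2) = 0 := by
        rw [Nat.shiftRight_eq_div_pow]
        exact Nat.div_eq_of_lt hmlt
      have hsnd : m >>> (l + 1) = 1 := by
        rw [Nat.shiftRight_eq_div_pow]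
        have hpos : 0 < 2 ^ (l + 1) := by positivity
        have h1 : 1 ≤ m / 2 ^ (l + 1) := (Nat.le_div_iff_mul_le hpos).mpr (by omega)
        have h2 : m / 2 ^ (l + 1) < 2 := by
          rw [Nat.div_lt_iff_lt_mul hpos]
          calc m < 2 ^ (l + 2) := hmlt
          _ = 2 * 2 ^ (l+1) := by ring
        omega
      rw [Finset.sum_range_succ, Finset.sum_range_succ]
      rw [if_pos hlast, if_neg (by omega), padBody_length_of_le σ nv hσp m (l+1) (by omega)]
      have hbound : ∑ j ∈ Finset.range l,
          (if m >>> (j + 1) = 0 then 0 else (padBody σ nv hσp m (j + 1)).length) ≤ 3 * l := by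
        calc ∑ j ∈ Finset.range l,
            (if m >>> (j + 1) = 0 then 0 else (padBody σ nv hσp m (j + 1)).length)
            ≤ ∑ j ∈ Finset.range l, 3 := by
              apply Finset.sum_le_sum
              intro j _
              split
              · omega
              · exact padBody_length_le σ nv hσp m (j + 1)
          _ = 3 * l := by
            rw [Finset.sum_const, Finset.card_range, smul_eq_mul]
            omega
      have hpb0 : (padBody σ nv hσp m 0).length ≤ 3 := padBody_length_le σ nv hσp m 0
      omega

/-- The padded input: embed an input of the `(n', g', σ')` SLG random access
problem into the `(n, g, σ)` problem. -/
def paddedInput (n g σ n' g' σ' : ℕ) (hn0 : 0 < n') (hσ0 : 0 < σ')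
    (hn : n' ≤ n) (hσ : σ' ≤ σ)
    (hg : (g' : ℝ) + 3 * Real.logb 2 n + 2 ≤ (g : ℝ))
    (y : RAInput n' g' σ') : RAInput n g σ where
  nv := y.nv + 1 + Nat.size (n - n')
  G := padded σ' σ y.nv hσ (lt_of_lt_of_le hσ0 hσ) y.G (n - n')
  unweighted := fun _ => rfl
  size_le := by
    have hσp : 0 < σ := lt_of_lt_of_le hσ0 hσ
    set m := n - n' with hm
    have h1 := padded_size σ' σ y.nv hσ hσp y.G m
    have h2 : (padded σ' σ y.nv hσ hσp y.G m).size ≤ g' + 3 * (Nat.size m - 1) + 2 := by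
      have := y.size_le; omega
    have h3 : 2 ^ (Nat.size m - 1) ≤ n := by
      rcases Nat.eq_zero_or_pos (Nat.size m) with h | h
      · simpa [h] using Nat.one_le_iff_ne_zero.mpr (hn0.trans_le hn).ne'
      · have h4 := Nat.lt_size.mp (by omega : Nat.size m - 1 < Nat.size m)
        omega
    have h4 : ((Nat.size m - 1 : ℕ) : ℝ) ≤ Real.logb 2 n := by
      have h5 : ((2:ℝ)) ^ (Nat.size m - 1 : ℕ) ≤ (n:ℝ) := by exact_mod_cast h3
      calc ((Nat.size m - 1 : ℕ) : ℝ)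
          = Real.logb 2 ((2:ℝ) ^ (Nat.size m - 1 : ℕ)) := by
            rw [Real.logb_pow, Real.logb_self_eq_one one_lt_two, mul_one]
        _ ≤ Real.logb 2 (n:ℝ) :=
            Real.logb_le_logb_of_le one_lt_two (pow_pos two_pos _) h5
    have h6 : ((padded σ' σ y.nv hσ hσp y.G m).size : ℝ) ≤ (g:ℝ) := by
      calc ((padded σ' σ y.nv hσ hσp y.G m).size : ℝ)
          ≤ ((g' + 3 * (Nat.size m - 1) + 2 : ℕ) : ℝ) := by exact_mod_cast h2
        _ = (g':ℝ) + 3 * ((Nat.size m - 1 : ℕ) : ℝ) + 2 := by push_cast; ring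
        _ ≤ (g':ℝ) + 3 * Real.logb 2 n + 2 := by linarith
        _ ≤ (g:ℝ) := hg
    exact_mod_cast h6
  len_eq := by
    rw [padded_len σ' σ y.nv hσ (lt_of_lt_of_le hσ0 hσ) y.G (n - n'), y.len_eq]
    omega

lemma paddedInput_answer (n g σ n' g' σ' : ℕ) (hn0 : 0 < n') (hσ0 : 0 < σ')
    (hn : n' ≤ n) (hσ : σ' ≤ σ)
    (hg : (g' : ℝ) + 3 * Real.logb 2 n + 2 ≤ (g : ℝ))
    (x : Fin n') (y : RAInput n' g' σ') :
    RAProblem n g σ (Fin.castLE hn x) (paddedInput n g σ n' g' σ' hn0 hσ0 hn hσ hg y) =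
      Fin.castLE hσ (RAProblem n' g' σ' x y) := by
  have hσp : 0 < σ := lt_of_lt_of_le hσ0 hσ
  have hGy : (paddedInput n g σ n' g' σ' hn0 hσ0 hn hσ hg y).G =
      padded σ' σ y.nv hσ hσp y.G (n - n') := rfl
  have hstart : (paddedInput n g σ n' g' σ' hn0 hσ0 hn hσ hg y).G.exp
      (paddedInput n g σ n' g' σ' hn0 hσ0 hn hσ hg y).G.start =
      (y.G.exp y.G.start).map (Fin.castLE hσ) ++
        List.replicate (n - n') (⟨0, hσp⟩ : Fin σ) :=
    exp_padded_start σ' σ y.nv hσ hσp y.G (n - n')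
  unfold RAProblem
  simp only [List.get_eq_getElem, Fin.coe_cast, Fin.coe_castLE]
  rw [List.getElem_of_eq hstart]
  rw [List.getElem_append_left (by rw [List.length_map, y.len_eq]; exact x.isLt)]
  rw [List.getElem_map]

end RACertAux



/-- Monotonicity of SLG Random Access certificates: if the
problem with parameters `(n, g, σ)` has `(M, w, t)`-certificates and
`n ≥ n'`, `g ≥ g' + 3·log₂ n + 2`, `σ ≥ σ'`, then the problem with parameters
`(n', g', σ')` also has `(M, w, t)`-certificates. -/
theorem ra_certificates_monotone (n g σ n' g' σ' M w t : ℕ)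
    (hn0 : 0 < n') (hg0 : 0 < g') (hσ0 : 0 < σ')
    (hM : 0 < M) (hw : 0 < w) (ht : 0 < t)
    (hn : n' ≤ n) (hσ : σ' ≤ σ)
    (hg : (g' : ℝ) + 3 * Real.logb 2 n + 2 ≤ (g : ℝ))
    (hRA : HasCertificates (RAProblem n g σ) M w t) :
    HasCertificates (RAProblem n' g' σ') M w t := by
  obtain ⟨D, hD⟩ := hRA
  refine ⟨fun y => D (RACertAux.paddedInput n g σ n' g' σ' hn0 hσ0 hn hσ hg y),
    fun x y => ?_⟩
  obtain ⟨C, hC, hC2⟩ :=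
    hD (Fin.castLE hn x) (RACertAux.paddedInput n g σ n' g' σ' hn0 hσ0 hn hσ hg y)
  refine ⟨C, hC, fun y' hagree => ?_⟩
  have h1 := hC2 (RACertAux.paddedInput n g σ n' g' σ' hn0 hσ0 hn hσ hg y') hagree
  have h2 := RACertAux.paddedInput_answer n g σ n' g' σ' hn0 hσ0 hn hσ hg x y
  have h3 := RACertAux.paddedInput_answer n g σ n' g' σ' hn0 hσ0 hn hσ hg x y'
  apply Fin.castLE_injective hσ
  rw [← h2, ← h3]
  exact h1
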